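/- Let X be a reflexive Banach space, R : X → [0,∞] a convex, weakly lower semicontinuous functional, L ⊂ X a finite-dimensional subspace with R(u + v) = R(u) for all u ∈ X, v ∈ L, and suppose there is a bounded linear projection P_L : X → L and constants C > 0, D ≥ 0 with ‖u − P_L u‖ ≤ C R(u) + D for all u. Let Y be a Banach space, K : X → Y bounded linear, and S : Y → [0,∞] proper, convex, weakly lower semicontinuous and coercive (‖vₖ‖_Y → ∞ ⟹ S(vₖ) → ∞). Then for every β > 0 the problem min_{u∈X} S(Ku) + β R(u) admits a minimizer. -/

import Mathlib

open Filter Topology ENNReal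

/-- Weak sequential convergence of a sequence in a normed space. -/
def WeakSeqConv {X : Type*} [NormedAddCommGroup X] [NormedSpace ℝ X]
    (u : ℕ → X) (x : X) : Prop :=
  ∀ f : StrongDual ℝ X, Tendsto (fun k => f (u k)) atTop (𝓝 (f x))

/-! The direct method. `S ∘ K + β R` is weakly sequentially lower semicontinuous, so it suffices
to find a bounded minimizing sequence. Sublevel sets are not bounded, since `R` does not see `L`,
but on a sublevel set `‖u - P_L u‖` is bounded by the coercivity estimate for `R` and `‖K u‖` by
the coercivity of `S`. As `K` is injective on a complement of `ker K` in the finite-dimensional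
`L`, subtracting from `u` the `ker K`-component of `P_L u` leaves the functional unchanged and
produces a point whose norm is bounded independently of `u`. -/

open scoped NNReal

def BoundedSeqWeaklyCompact (X : Type*) [NormedAddCommGroup X] [NormedSpace ℝ X] : Prop :=
  ∀ u : ℕ → X, (∃ M : ℝ, ∀ k, ‖u k‖ ≤ M) →
    ∃ (φ : ℕ → ℕ) (x : X), StrictMono φ ∧ WeakSeqConv (u ∘ φ) x

def WeakSeqLSC {X : Type*} [NormedAddCommGroup X] [NormedSpace ℝ X] (F : X → ℝ≥0∞) : Prop :=
  ∀ (u : ℕ → X) (x : X), WeakSeqConv u x → F x ≤ liminf (fun k => F (u k)) atTop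

theorem ENNReal.le_liminf_add {u v : ℕ → ℝ≥0∞} :
    liminf u atTop + liminf v atTop ≤ liminf (fun k => u k + v k) atTop := by
  simp only [liminf_eq_iSup_iInf_of_nat]
  rw [ENNReal.iSup_add_iSup_of_monotone (fun _ _ h => biInf_mono fun _ => h.trans)
    (fun _ _ h => biInf_mono fun _ => h.trans)]
  exact iSup_mono fun n => le_iInf₂ fun k hk => add_le_add (iInf₂_le k hk) (iInf₂_le k hk)

section WeakSequential

variable {X Y : Type*} [NormedAddCommGroup X] [NormedSpace ℝ X]
  [NormedAddCommGroup Y] [NormedSpace ℝ Y]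

theorem WeakSeqConv.map {u : ℕ → X} {x : X} (h : WeakSeqConv u x) (K : X →L[ℝ] Y) :
    WeakSeqConv (fun k => K (u k)) (K x) :=
  fun f => h (f.comp K)

namespace WeakSeqLSC

variable {F G : X → ℝ≥0∞}

theorem comp {S : Y → ℝ≥0∞} (hS : WeakSeqLSC S) (K : X →L[ℝ] Y) :
    WeakSeqLSC (fun x => S (K x)) :=
  fun _ _ h => hS _ _ (h.map K)

theorem add (hF : WeakSeqLSC F) (hG : WeakSeqLSC G) : WeakSeqLSC (fun x => F x + G x) :=
  fun u x h => (add_le_add (hF u x h) (hG u x h)).trans ENNReal.le_liminf_add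

theorem const_mul (hF : WeakSeqLSC F) (c : ℝ≥0∞) : WeakSeqLSC (fun x => c * F x) := by
  intro u x h
  calc c * F x ≤ liminf (fun _ => c) atTop * liminf (fun k => F (u k)) atTop := by
        rw [liminf_const]; exact mul_le_mul_right (hF u x h) c
    _ ≤ liminf (fun k => c * F (u k)) atTop := ENNReal.le_liminf_mul

theorem exists_forall_le_of_isBounded (hX : BoundedSeqWeaklyCompact X) (hF : WeakSeqLSC F)
    {T : Set X} (hT : Bornology.IsBounded T) (hTne : T.Nonempty) :
    ∃ x, ∀ y ∈ T, F x ≤ F y := by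
  obtain ⟨a, -, ha, haT⟩ := exists_seq_tendsto_sInf (hTne.image F) (OrderBot.bddBelow _)
  choose u huT hFu using haT
  obtain ⟨M, hM⟩ := hT.exists_norm_le
  obtain ⟨φ, x, hφ, hx⟩ := hX u ⟨M, fun k => hM _ (huT k)⟩
  refine ⟨x, fun y hy => ?_⟩
  calc F x ≤ liminf (fun k => F (u (φ k))) atTop := hF _ _ hx
    _ = sInf (F '' T) := by simp only [hFu]; exact (ha.comp hφ.tendsto_atTop).liminf_eq
    _ ≤ F y := sInf_le (Set.mem_image_of_mem F hy)

theorem exists_forall_le (hX : BoundedSeqWeaklyCompact X) (hF : WeakSeqLSC F)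
    (hrep : ∀ B ≠ ⊤, ∃ M : ℝ, ∀ u, F u ≤ B → ∃ y, F y ≤ F u ∧ ‖y‖ ≤ M) :
    ∃ x, ∀ v, F x ≤ F v := by
  by_cases hfin : ∃ v₀, F v₀ ≠ ⊤
  swap
  · push Not at hfin
    exact ⟨0, fun v => by simp [hfin v]⟩
  obtain ⟨v₀, hv₀⟩ := hfin
  obtain ⟨M, hM⟩ := hrep _ hv₀
  obtain ⟨y₀, hy₀v₀, hy₀⟩ := hM v₀ le_rfl
  obtain ⟨x, hx⟩ := hF.exists_forall_le_of_isBounded hX (Metric.isBounded_closedBall (x := 0))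
    ⟨y₀, mem_closedBall_zero_iff.2 hy₀⟩
  refine ⟨x, fun v => ?_⟩
  rcases le_total (F v) (F v₀) with hv | hv
  · obtain ⟨y, hyv, hy⟩ := hM v hv
    exact (hx y (mem_closedBall_zero_iff.2 hy)).trans hyv
  · exact (hx y₀ (mem_closedBall_zero_iff.2 hy₀)).trans (hy₀v₀.trans hv)

end WeakSeqLSC

end WeakSequential

theorem exists_norm_le_of_le_of_tendsto_top {Y : Type*} [Norm Y] {S : Y → ℝ≥0∞}
    (hS : ∀ v : ℕ → Y, Tendsto (fun k => ‖v k‖) atTop atTop →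
      Tendsto (fun k => S (v k)) atTop (𝓝 ⊤))
    {B : ℝ≥0∞} (hB : B ≠ ⊤) : ∃ M : ℝ, ∀ y, S y ≤ B → ‖y‖ ≤ M := by
  by_contra! h
  choose v hvS hvn using fun n : ℕ => h n
  have hv := hS v (tendsto_atTop_mono (fun n => (hvn n).le) tendsto_natCast_atTop_atTop)
  obtain ⟨n, hn⟩ := (hv.eventually_const_lt hB.lt_top).exists
  exact (hvS n).not_gt hn

theorem Submodule.exists_mem_ker_norm_sub_le {𝕜 E F : Type*} [NontriviallyNormedField 𝕜]
    [CompleteSpace 𝕜] [NormedAddCommGroup E] [NormedSpace 𝕜 E] [NormedAddCommGroup F]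
    [NormedSpace 𝕜 F] (K : E →ₗ[𝕜] F) (L : Submodule 𝕜 E) [FiniteDimensional 𝕜 L] :
    ∃ c : ℝ≥0, ∀ p ∈ L, ∃ n ∈ L, K n = 0 ∧ ‖p - n‖ ≤ c * ‖K p‖ := by
  set T := K ∘ₗ L.subtype
  obtain ⟨N, hN⟩ := (LinearMap.ker T).exists_isCompl
  have hinj : Function.Injective (T ∘ₗ N.subtype) := by
    refine (injective_iff_map_eq_zero _).2 fun m hm => Subtype.ext ?_
    exact Submodule.disjoint_def.1 hN.disjoint _ hm m.2
  obtain ⟨c, -, hc⟩ := (T ∘ₗ N.subtype).injective_iff_antilipschitz.1 hinj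
  refine ⟨c, fun p hp => ?_⟩
  obtain ⟨n, hn, m, hm, hnm⟩ :=
    Submodule.mem_sup.1 (hN.sup_eq_top ▸ Submodule.mem_top : (⟨p, hp⟩ : L) ∈ _)
  have hpn : p - n = m := by
    rw [show p = n + m from (congrArg Subtype.val hnm).symm, add_sub_cancel_left]
  have hKp : K p = K m := by
    rw [← hpn, map_sub, show K n = 0 from hn, sub_zero]
  refine ⟨n, n.2, hn, ?_⟩
  rw [hpn, hKp]
  exact ZeroHomClass.bound_of_antilipschitz _ hc ⟨m, hm⟩

section Tikhonov

variable {X Y : Type*} [NormedAddCommGroup X] [NormedSpace ℝ X]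
  [NormedAddCommGroup Y] [NormedSpace ℝ Y]

theorem exists_bounded_shift_of_tikhonov_le {R : X → ℝ≥0∞} {L : Submodule ℝ X}
    [FiniteDimensional ℝ L] (hRinv : ∀ u : X, ∀ v ∈ L, R (u + v) = R u)
    {P : X → X} (hPmem : ∀ x, P x ∈ L) {C D : ℝ}
    (hcoerc : ∀ u : X, ENNReal.ofReal ‖u - P u‖ ≤ ENNReal.ofReal C * R u + ENNReal.ofReal D)
    (K : X →L[ℝ] Y) {S : Y → ℝ≥0∞}
    (hScoerc : ∀ v : ℕ → Y, Tendsto (fun k => ‖v k‖) atTop atTop →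
      Tendsto (fun k => S (v k)) atTop (𝓝 ⊤))
    {c : ℝ≥0∞} (hc : c ≠ 0) {B : ℝ≥0∞} (hB : B ≠ ⊤) :
    ∃ M : ℝ, ∀ u, S (K u) + c * R u ≤ B →
      ∃ y, S (K y) + c * R y ≤ S (K u) + c * R u ∧ ‖y‖ ≤ M := by
  obtain ⟨MS, hMS⟩ := exists_norm_le_of_le_of_tendsto_top hScoerc hB
  obtain ⟨c₀, hc₀⟩ := L.exists_mem_ker_norm_sub_le (K : X →ₗ[ℝ] Y)
  have hBc : B / c ≠ ⊤ := (ENNReal.div_lt_top hB hc).ne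
  set MR := (ENNReal.ofReal C * (B / c) + ENNReal.ofReal D).toReal
  have hdist : ∀ u, S (K u) + c * R u ≤ B → ‖u - P u‖ ≤ MR := by
    intro u hu
    have hR : R u ≤ B / c := by
      rw [ENNReal.le_div_iff_mul_le (Or.inl hc) (Or.inr hB), mul_comm]
      exact le_add_self.trans hu
    rw [← ENNReal.ofReal_le_iff_le_toReal (by finiteness)]
    exact (hcoerc u).trans (by gcongr)
  refine ⟨MR + c₀ * (MS + ‖K‖ * MR), fun u hu => ?_⟩
  obtain ⟨n, hnL, hKn, hn⟩ := hc₀ (P u) (hPmem u)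
  rw [ContinuousLinearMap.coe_coe] at hKn hn
  refine ⟨u - n, le_of_eq ?_, ?_⟩
  · rw [map_sub, hKn, sub_zero, sub_eq_add_neg, hRinv u _ (L.neg_mem hnL)]
  have hKP : ‖K (P u)‖ ≤ MS + ‖K‖ * MR :=
    calc ‖K (P u)‖ = ‖K u - K (u - P u)‖ := by rw [map_sub, _root_.sub_sub_cancel]
      _ ≤ ‖K u‖ + ‖K (u - P u)‖ := norm_sub_le _ _
      _ ≤ MS + ‖K‖ * MR := add_le_add (hMS _ (le_self_add.trans hu))
          ((K.le_opNorm _).trans (by gcongr; exact hdist u hu))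
  calc ‖u - n‖ = ‖(u - P u) + (P u - n)‖ := by rw [sub_add_sub_cancel]
    _ ≤ ‖u - P u‖ + ‖P u - n‖ := norm_add_le _ _
    _ ≤ MR + c₀ * (MS + ‖K‖ * MR) := add_le_add (hdist u hu) (hn.trans (by gcongr))

end Tikhonov

theorem stmt_8_general {X Y : Type*}
    [NormedAddCommGroup X] [NormedSpace ℝ X]
    [NormedAddCommGroup Y] [NormedSpace ℝ Y]
    (hrefl : ∀ u : ℕ → X, (∃ M : ℝ, ∀ k, ‖u k‖ ≤ M) →
      ∃ (φ : ℕ → ℕ) (x : X), StrictMono φ ∧ WeakSeqConv (u ∘ φ) x)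
    (R : X → ℝ≥0∞)
    (hRlsc : ∀ (u : ℕ → X) (ulim : X), WeakSeqConv u ulim →
      R ulim ≤ liminf (fun k => R (u k)) atTop)
    (L : Subspace ℝ X) [FiniteDimensional ℝ L]
    (hRinv : ∀ u : X, ∀ v ∈ L, R (u + v) = R u)
    (PL : X →L[ℝ] X) (hPLmem : ∀ x, PL x ∈ L)
    (C D : ℝ)
    (hcoerc : ∀ u : X,
      ENNReal.ofReal ‖u - PL u‖ ≤ ENNReal.ofReal C * R u + ENNReal.ofReal D)
    (K : X →L[ℝ] Y)
    (S : Y → ℝ≥0∞)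
    (hSlsc : ∀ (v : ℕ → Y) (vlim : Y), WeakSeqConv v vlim →
      S vlim ≤ liminf (fun k => S (v k)) atTop)
    (hScoerc : ∀ v : ℕ → Y, Tendsto (fun k => ‖v k‖) atTop atTop →
      Tendsto (fun k => S (v k)) atTop (𝓝 ⊤))
    (β : ℝ) (hβ : 0 < β) :
    ∃ u : X, ∀ v : X,
      S (K u) + ENNReal.ofReal β * R u ≤ S (K v) + ENNReal.ofReal β * R v :=
  WeakSeqLSC.exists_forall_le hrefl
    ((WeakSeqLSC.comp hSlsc K).add (WeakSeqLSC.const_mul hRlsc _))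
    fun _ hB => exists_bounded_shift_of_tikhonov_le hRinv hPLmem hcoerc K hScoerc
      (ENNReal.ofReal_pos.2 hβ).ne' hB

/-- abstract form of Theorem 6.1. For a convex, weakly lower
semicontinuous functional `R` on a reflexive space `X` (reflexivity encoded as
sequential weak compactness of bounded sequences), invariant and coercive up to a
finite-dimensional subspace `L`, a bounded linear `K : X → Y` and a proper, convex,
weakly l.s.c., coercive discrepancy `S`, the Tikhonov problem
`min_u S(Ku) + β R(u)` has a minimizer for every `β > 0`. -/
theorem stmt_8 {X Y : Type*}
    [NormedAddCommGroup X] [NormedSpace ℝ X] [CompleteSpace X]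
    [NormedAddCommGroup Y] [NormedSpace ℝ Y] [CompleteSpace Y]
    (hrefl : ∀ u : ℕ → X, (∃ M : ℝ, ∀ k, ‖u k‖ ≤ M) →
      ∃ (φ : ℕ → ℕ) (x : X), StrictMono φ ∧ WeakSeqConv (u ∘ φ) x)
    (R : X → ℝ≥0∞)
    (hRconv : ∀ x y : X, ∀ t : ℝ, 0 ≤ t → t ≤ 1 →
      R (t • x + (1 - t) • y) ≤ ENNReal.ofReal t * R x + ENNReal.ofReal (1 - t) * R y)
    (hRlsc : ∀ (u : ℕ → X) (ulim : X), WeakSeqConv u ulim →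
      R ulim ≤ liminf (fun k => R (u k)) atTop)
    (L : Subspace ℝ X) [FiniteDimensional ℝ L]
    (hRinv : ∀ u : X, ∀ v ∈ L, R (u + v) = R u)
    (PL : X →L[ℝ] X) (hPLmem : ∀ x, PL x ∈ L) (hPLproj : ∀ x ∈ L, PL x = x)
    (C D : ℝ) (hC : 0 < C) (hD : 0 ≤ D)
    (hcoerc : ∀ u : X,
      ENNReal.ofReal ‖u - PL u‖ ≤ ENNReal.ofReal C * R u + ENNReal.ofReal D)
    (K : X →L[ℝ] Y)
    (S : Y → ℝ≥0∞)
    (hSproper : ∃ y : Y, S y ≠ ⊤)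
    (hSconv : ∀ y₁ y₂ : Y, ∀ t : ℝ, 0 ≤ t → t ≤ 1 →
      S (t • y₁ + (1 - t) • y₂) ≤ ENNReal.ofReal t * S y₁ + ENNReal.ofReal (1 - t) * S y₂)
    (hSlsc : ∀ (v : ℕ → Y) (vlim : Y), WeakSeqConv v vlim →
      S vlim ≤ liminf (fun k => S (v k)) atTop)
    (hScoerc : ∀ v : ℕ → Y, Tendsto (fun k => ‖v k‖) atTop atTop →
      Tendsto (fun k => S (v k)) atTop (𝓝 ⊤))
    (β : ℝ) (hβ : 0 < β) :
    ∃ u : X, ∀ v : X,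
      S (K u) + ENNReal.ofReal β * R u ≤ S (K v) + ENNReal.ofReal β * R v :=
  stmt_8_general hrefl R hRlsc L hRinv PL hPLmem C D hcoerc K S hSlsc hScoerc β hβ
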